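/- For s ∈ (1/2, 1], the function F_s(t) = θ(t)|t|^s, where θ(t) = (3/8)|t|^{1/2}(t² - (10/3)|t| + 5) for |t| ≤ 1 and θ(t) = 1 for |t| > 1, is continuously differentiable on ℝ, and F'_s is bounded and uniformly continuous on ℝ. -/

import Mathlib

noncomputable def theta (t : ℝ) : ℝ :=
  if |t| ≤ 1 then (3/8) * |t| ^ ((1:ℝ)/2) * (t^2 - (10/3) * |t| + 5) else 1

noncomputable def Fs (s t : ℝ) : ℝ := theta t * |t| ^ s

/-!
On `(0, 1]` the function is `r ↦ (3/8) r^(s+1/2) (r² - 10r/3 + 5)` and beyond it is `r ^ s`;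
the two derivative formulas both equal `s` at `r = 1`, and since `s > 1/2` the first one
vanishes at `0`. `F_s` is even and continuous, and the odd extension of this derivative is
continuous and is the derivative of `F_s` away from `{0, ±1}`, hence everywhere. At `±∞` it
tends to `±1` (for `s = 1`) or to `0` (for `s < 1`), and a continuous function on `ℝ` with
limits at both ends is bounded and uniformly continuous.
-/

open Filter Topology Set

theorem hasDerivAt_of_eventually_hasDerivAt {E : Type*} [NormedAddCommGroup E] [NormedSpace ℝ E]
    {f g : ℝ → E} {x : ℝ} (hfg : ∀ᶠ y in 𝓝[≠] x, HasDerivAt f (g y) y)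
    (hf : ContinuousAt f x) (hg : ContinuousAt g x) : HasDerivAt f (g x) x := by
  have hdiff : DifferentiableOn ℝ f {y | HasDerivAt f (g y) y} :=
    fun y hy => hy.differentiableAt.differentiableWithinAt
  have hderiv : deriv f =ᶠ[𝓝[≠] x] g := hfg.mono fun y hy => hy.deriv
  have hg' : Tendsto g (𝓝[≠] x) (𝓝 (g x)) := hg.tendsto.mono_left nhdsWithin_le_nhds
  have hright : HasDerivWithinAt f (g x) (Ici x) x :=
    hasDerivWithinAt_Ici_of_tendsto_deriv hdiff hf.continuousWithinAt
      (nhdsWithin_mono _ (fun y (h : x < y) => h.ne') hfg)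
      ((hg'.congr' hderiv.symm).mono_left (nhdsWithin_mono _ fun y (h : x < y) => h.ne'))
  have hleft : HasDerivWithinAt f (g x) (Iic x) x :=
    hasDerivWithinAt_Iic_of_tendsto_deriv hdiff hf.continuousWithinAt
      (nhdsWithin_mono _ (fun y (h : y < x) => h.ne) hfg)
      ((hg'.congr' hderiv.symm).mono_left (nhdsWithin_mono _ fun y (h : y < x) => h.ne))
  simpa using hleft.union hright

theorem Function.Even.hasDerivAt_neg {E : Type*} [NormedAddCommGroup E] [NormedSpace ℝ E]
    {f : ℝ → E} {f' : E} {x : ℝ} (hf : f.Even) (h : HasDerivAt f f' x) :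
    HasDerivAt f (-f') (-x) := by
  have h' : HasDerivAt f f' (-(-x)) := by rwa [neg_neg]
  simpa [Function.comp_def, hf.eq] using h'.scomp (-x) (_root_.hasDerivAt_neg (-x))

section TendstoAtBotAtTop

variable {E : Type*} [NormedAddCommGroup E] {f : ℝ → E} {a b : E}

theorem Continuous.isBounded_range_of_tendsto_atBot_atTop (hf : Continuous f)
    (ha : Tendsto f atBot (𝓝 a)) (hb : Tendsto f atTop (𝓝 b)) : Bornology.IsBounded (range f) :=
  hf.isBounded_range_iff_isBigO_atTop_atBot.2 ⟨hb.isBigO_one ℝ, ha.isBigO_one ℝ⟩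

-- Subtracting `t ↦ a + clamp t • (b - a)`, which is Lipschitz, leaves a function vanishing at
-- infinity.
theorem Continuous.uniformContinuous_of_tendsto_atBot_atTop [NormedSpace ℝ E] (hf : Continuous f)
    (ha : Tendsto f atBot (𝓝 a)) (hb : Tendsto f atTop (𝓝 b)) : UniformContinuous f := by
  set c : ℝ → E := fun t => a + (projIcc 0 1 zero_le_one t : ℝ) • (b - a)
  have hc : UniformContinuous c :=
    uniformContinuous_const.add
      ((ContinuousLinearMap.smulRight (1 : ℝ →L[ℝ] ℝ) (b - a)).uniformContinuous.comp
        (uniformContinuous_subtype_val.comp (LipschitzWith.projIcc zero_le_one).uniformContinuous))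
  have hca : ∀ᶠ t in atBot, c t = a := by
    filter_upwards [eventually_le_atBot 0] with t ht
    simp [c, projIcc_of_le_left _ ht]
  have hcb : ∀ᶠ t in atTop, c t = b := by
    filter_upwards [eventually_ge_atTop 1] with t ht
    simp [c, projIcc_of_right_le _ ht]
  have hdiff : Tendsto (fun t => f t - c t) (cocompact ℝ) (𝓝 0) := by
    rw [cocompact_eq_atBot_atTop, tendsto_sup]
    constructor
    · simpa using ha.sub (tendsto_const_nhds.congr' (hca.mono fun _ h => h.symm))
    · simpa using hb.sub (tendsto_const_nhds.congr' (hcb.mono fun _ h => h.symm))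
  simpa using ((hf.sub hc.continuous).uniformContinuous_of_tendsto_cocompact hdiff).add hc

end TendstoAtBotAtTop

theorem continuous_theta : Continuous theta := by
  refine Continuous.if_le (by fun_prop (disch := norm_num)) continuous_const continuous_abs
    continuous_const fun t ht => ?_
  rw [ht, Real.one_rpow, ← sq_abs, ht]
  norm_num

theorem continuous_Fs {s : ℝ} (hs : 0 ≤ s) : Continuous (Fs s) :=
  continuous_theta.mul (continuous_abs.rpow_const fun _ => Or.inr hs)

theorem even_Fs (s : ℝ) : (Fs s).Even := fun t => by
  simp only [Fs, theta, abs_neg, neg_sq]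

theorem Fs_of_pos_of_le_one (s : ℝ) {t : ℝ} (ht : 0 < t) (ht1 : t ≤ 1) :
    Fs s t = 3 / 8 * t ^ (s + 1 / 2) * (t ^ 2 - 10 / 3 * t + 5) := by
  rw [Fs, theta, abs_of_pos ht, if_pos ht1, Real.rpow_add ht]
  ring

theorem Fs_of_one_lt (s : ℝ) {t : ℝ} (ht : 1 < t) : Fs s t = t ^ s := by
  rw [Fs, theta, abs_of_pos (one_pos.trans ht), if_neg ht.not_ge, one_mul]

noncomputable def fsDerivPos (s r : ℝ) : ℝ :=
  if r ≤ 1 then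
    3 / 8 * r ^ (s - 1 / 2) * ((s + 5 / 2) * r ^ 2 - 10 / 3 * (s + 3 / 2) * r + 5 * (s + 1 / 2))
  else s * r ^ (s - 1)

noncomputable def fsDeriv (s t : ℝ) : ℝ := if 0 ≤ t then fsDerivPos s t else -fsDerivPos s (-t)

theorem fsDerivPos_zero {s : ℝ} (hs : 1 / 2 < s) : fsDerivPos s 0 = 0 := by
  rw [fsDerivPos, if_pos zero_le_one, Real.zero_rpow (by linarith)]
  ring

theorem continuous_fsDerivPos {s : ℝ} (hs : 1 / 2 < s) : Continuous (fsDerivPos s) := by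
  have hpow : Continuous fun r : ℝ => r ^ (s - 1 / 2) := Real.continuous_rpow_const (by linarith)
  refine continuous_if_le continuous_id continuous_const
    ((continuous_const.mul hpow).mul (by fun_prop)).continuousOn
    (continuousOn_const.mul
      (continuousOn_id.rpow_const fun r (hr : 1 ≤ r) => Or.inl (by positivity)))
    fun r (hr : r = 1) => ?_
  rw [hr, Real.one_rpow, Real.one_rpow]
  ring

theorem continuous_fsDeriv {s : ℝ} (hs : 1 / 2 < s) : Continuous (fsDeriv s) :=
  Continuous.if_le (continuous_fsDerivPos hs) ((continuous_fsDerivPos hs).comp continuous_neg).neg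
    continuous_const continuous_id fun t ht => by simp [← ht, fsDerivPos_zero hs]

theorem odd_fsDeriv {s : ℝ} (hs : 1 / 2 < s) : (fsDeriv s).Odd := fun t => by
  rcases lt_trichotomy t 0 with ht | rfl | ht
  · rw [fsDeriv, fsDeriv, if_pos (by linarith), if_neg ht.not_ge, neg_neg]
  · simp [fsDeriv, fsDerivPos_zero hs]
  · rw [fsDeriv, fsDeriv, if_neg (by linarith), if_pos ht.le, neg_neg]

theorem hasDerivAt_Fs_of_mem_Ioo {s t : ℝ} (ht : t ∈ Ioo 0 1) :
    HasDerivAt (Fs s) (fsDeriv s t) t := by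
  obtain ⟨ht0, ht1⟩ := ht
  have hFs : (fun r => 3 / 8 * r ^ (s + 1 / 2) * (r ^ 2 - 10 / 3 * r + 5)) =ᶠ[𝓝 t] Fs s := by
    filter_upwards [Ioo_mem_nhds ht0 ht1] with r hr
    rw [Fs_of_pos_of_le_one s hr.1 hr.2.le]
  have hpoly : HasDerivAt (fun r : ℝ => r ^ 2 - 10 / 3 * r + 5) (2 * t - 10 / 3) t := by
    simpa using ((hasDerivAt_pow 2 t).sub ((hasDerivAt_id t).const_mul (10 / 3))).add_const 5
  refine ((((Real.hasDerivAt_rpow_const (Or.inl ht0.ne')).const_mul (3 / 8)).mul hpoly)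
    |>.congr_of_eventuallyEq hFs.symm).congr_deriv ?_
  rw [fsDeriv, if_pos ht0.le, fsDerivPos, if_pos ht1.le, show s + 1 / 2 - 1 = s - 1 / 2 by ring,
    show s + 1 / 2 = (s - 1 / 2) + 1 by ring, Real.rpow_add ht0, Real.rpow_one]
  ring

theorem hasDerivAt_Fs_of_one_lt {s t : ℝ} (ht : 1 < t) : HasDerivAt (Fs s) (fsDeriv s t) t := by
  have hFs : (fun r => r ^ s) =ᶠ[𝓝 t] Fs s := by
    filter_upwards [Ioi_mem_nhds ht] with r hr
    rw [Fs_of_one_lt s hr]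
  rw [fsDeriv, if_pos (zero_le_one.trans ht.le), fsDerivPos, if_neg ht.not_ge]
  exact (Real.hasDerivAt_rpow_const (Or.inl (one_pos.trans ht).ne')).congr_of_eventuallyEq hFs.symm

theorem hasDerivAt_Fs_of_pos {s t : ℝ} (hs : 1 / 2 < s) (ht : 0 < t) :
    HasDerivAt (Fs s) (fsDeriv s t) t := by
  have hne_one : ∀ r, 0 < r → r ≠ 1 → HasDerivAt (Fs s) (fsDeriv s r) r := fun r hr hr1 =>
    hr1.lt_or_gt.elim (fun h => hasDerivAt_Fs_of_mem_Ioo ⟨hr, h⟩) hasDerivAt_Fs_of_one_lt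
  rcases eq_or_ne t 1 with rfl | ht1
  · refine hasDerivAt_of_eventually_hasDerivAt ?_ (continuous_Fs (by linarith)).continuousAt
      (continuous_fsDeriv hs).continuousAt
    filter_upwards [nhdsWithin_le_nhds (Ioi_mem_nhds one_pos), self_mem_nhdsWithin] with r hr hr1
      using hne_one r hr hr1
  · exact hne_one t ht ht1

theorem hasDerivAt_Fs {s : ℝ} (hs : 1 / 2 < s) (t : ℝ) : HasDerivAt (Fs s) (fsDeriv s t) t := by
  have hne_zero : ∀ r ≠ 0, HasDerivAt (Fs s) (fsDeriv s r) r := by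
    intro r hr
    rcases hr.lt_or_gt with hr | hr
    · simpa [(odd_fsDeriv hs).eq] using
        (even_Fs s).hasDerivAt_neg (hasDerivAt_Fs_of_pos hs (neg_pos.2 hr))
    · exact hasDerivAt_Fs_of_pos hs hr
  exact hasDerivAt_of_hasDerivAt_of_ne' hne_zero (continuous_Fs (by linarith)).continuousAt
    (continuous_fsDeriv hs).continuousAt t

theorem tendsto_fsDeriv_atTop {s : ℝ} (hs1 : s ≤ 1) :
    Tendsto (fsDeriv s) atTop (𝓝 (if s = 1 then 1 else 0)) := by
  have hpow : fsDeriv s =ᶠ[atTop] fun t => s * t ^ (s - 1) := by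
    filter_upwards [eventually_gt_atTop 1] with t ht
    rw [fsDeriv, if_pos (zero_le_one.trans ht.le), fsDerivPos, if_neg ht.not_ge]
  refine Tendsto.congr' hpow.symm ?_
  rcases hs1.lt_or_eq with hs1 | rfl
  · simpa [hs1.ne] using (tendsto_rpow_neg_atTop (sub_pos.2 hs1)).const_mul s
  · simp

theorem stmt_12 (s : ℝ) (hs : s ∈ Set.Ioc (1/2 : ℝ) 1) :
    ContDiff ℝ 1 (Fs s) ∧
    (∃ M : ℝ, ∀ t : ℝ, |deriv (Fs s) t| ≤ M) ∧
    UniformContinuous (deriv (Fs s)) := by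
  obtain ⟨hs, hs1⟩ := hs
  have hderiv : deriv (Fs s) = fsDeriv s := funext fun t => (hasDerivAt_Fs hs t).deriv
  have hcont := continuous_fsDeriv hs
  have htop := tendsto_fsDeriv_atTop hs1
  have hbot : Tendsto (fsDeriv s) atBot (𝓝 (-if s = 1 then 1 else 0)) := by
    simpa [Function.comp_def, (odd_fsDeriv hs).eq] using (htop.comp tendsto_neg_atBot_atTop).neg
  obtain ⟨M, hM⟩ :=
    isBounded_iff_forall_norm_le.1 (hcont.isBounded_range_of_tendsto_atBot_atTop hbot htop)
  rw [hderiv]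
  exact ⟨contDiff_one_iff_deriv.2 ⟨fun t => (hasDerivAt_Fs hs t).differentiableAt, hderiv ▸ hcont⟩,
    ⟨M, fun t => hM _ (mem_range_self t)⟩, hcont.uniformContinuous_of_tendsto_atBot_atTop hbot htop⟩
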